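/- In the repeated insertion model with dispersion 0 ≤ φ < 1, the probability that item j is ranked before item 1 (for j > 1) equals (j - 1 - j·φ + φ^{j}) / (φ^{j-1}·(1-φ)^2·(1+φ+...+φ^{j-2})·(1+φ+...+φ^{j-1})) · φ^{2(j-1)}, equivalently it equals φ^{j-1}·(j-1 - jφ + φ^j) / ((1-φ)^2·(1+...+φ^{j-2})·(1+...+φ^{j-1})). -/

import Mathlib

/-- Insertion probability in the repeated insertion model. -/
noncomputable def insP (φ : ℝ) (s l : ℕ) : ℝ :=
  φ ^ (s - l) / ∑ t ∈ Finset.range s, φ ^ t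

/-- Probability that item 1 is at position `r` after `s` insertions. -/
noncomputable def qpos (φ : ℝ) : ℕ → ℕ → ℝ
  | 0, _ => 0
  | 1, r => if r = 1 then 1 else 0
  | (s+2), r =>
      qpos φ (s+1) r * (∑ l ∈ Finset.Icc (r+1) (s+2), insP φ (s+2) l)
      + qpos φ (s+1) (r-1) * (∑ l ∈ Finset.Icc 1 (r-1), insP φ (s+2) l)

/-- Probability that item `j` is ranked before item 1 in the repeated
insertion model: item `j` must be inserted at a position `l ≤ r`, where `r`
is the position of item 1 after `j-1` insertions. -/
noncomputable def probJBeforeOne (φ : ℝ) (j : ℕ) : ℝ :=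
  ∑ r ∈ Finset.Icc 1 (j-1), qpos φ (j-1) r * ∑ l ∈ Finset.Icc 1 r, insP φ j l

/-!
Write `Z s = 1 + φ + ⋯ + φ ^ (s - 1)`. After `s` insertions item 1 is at position `r` with
probability `φ ^ (r - 1) / Z s`: the recursion defining `qpos` preserves this law because its two
terms recombine through `φ ^ (r - 1) Z s = φ ^ (r - 1) Z (s + 1 - r) + φ ^ s Z (r - 1)`.
Item `s + 1` is then inserted in front of position `r` with probability `φ ^ (s + 1 - r) Z r / Z (s + 1)`,
so every term of `probJBeforeOne φ (s + 1)` is `φ ^ s Z r / (Z s Z (s + 1))`, and the numerator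
comes from `(1 - φ)² ∑_{r ≤ s} Z r = s - (s + 1) φ + φ ^ (s + 1)`.
-/

open Finset

section GeomSum

variable {R : Type*} [CommRing R] (x : R)

lemma sum_Icc_pow_sub {s b : ℕ} (a : ℕ) (hb : b ≤ s) :
    ∑ l ∈ Icc a b, x ^ (s - l) = x ^ (s - b) * ∑ t ∈ range (b + 1 - a), x ^ t := by
  rw [← Ico_add_one_right_eq_Icc, sum_Ico_eq_sum_range, mul_sum,
    ← sum_range_reflect (fun k => x ^ (s - b) * x ^ k)]
  refine sum_congr rfl fun i hi => ?_
  rw [← pow_add]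
  congr 1
  have := mem_range.mp hi
  omega

lemma pow_mul_geom_sum_eq {i s : ℕ} (hi : i ≤ s) :
    x ^ i * ∑ t ∈ range s, x ^ t =
      x ^ i * ∑ t ∈ range (s - i), x ^ t + x ^ s * ∑ t ∈ range i, x ^ t := by
  obtain ⟨k, rfl⟩ := Nat.exists_eq_add_of_le hi
  rw [Nat.add_sub_cancel_left, add_comm i k, sum_range_add]
  simp_rw [pow_add, ← mul_sum]
  ring

lemma sum_range_geom_sum_mul_one_sub_sq (n : ℕ) :
    (∑ r ∈ range n, ∑ t ∈ range r, x ^ t) * (1 - x) ^ 2 = n - 1 - n * x + x ^ n := by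
  induction n with
  | zero => simp
  | succ n ih =>
    have h := geom_sum_mul_neg x n
    rw [sum_range_succ, add_mul, ih]
    push_cast
    linear_combination (1 - x) * h

end GeomSum

lemma sum_Icc_insP (φ : ℝ) {s b : ℕ} (a : ℕ) (hb : b ≤ s) :
    ∑ l ∈ Icc a b, insP φ s l =
      φ ^ (s - b) * (∑ t ∈ range (b + 1 - a), φ ^ t) / ∑ t ∈ range s, φ ^ t := by
  simp only [insP, ← sum_div, sum_Icc_pow_sub φ a hb]

lemma qpos_succ (φ : ℝ) {s : ℕ} (hs : 1 ≤ s) (r : ℕ) :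
    qpos φ (s + 1) r =
      qpos φ s r * ∑ l ∈ Icc (r + 1) (s + 1), insP φ (s + 1) l
      + qpos φ s (r - 1) * ∑ l ∈ Icc 1 (r - 1), insP φ (s + 1) l := by
  obtain ⟨m, rfl⟩ : ∃ m, s = m + 1 := ⟨s - 1, by omega⟩
  rfl

lemma qpos_eq_zero (φ : ℝ) {s r : ℕ} (hr : r = 0 ∨ s < r) : qpos φ s r = 0 := by
  induction s generalizing r with
  | zero => rfl
  | succ s ih =>
    rcases Nat.eq_zero_or_pos s with rfl | hs
    · simp [qpos, show r ≠ 1 by omega]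
    · rw [qpos_succ φ hs, ih (by omega), ih (by omega)]
      ring

lemma qpos_eq (φ : ℝ) (hφ : 0 ≤ φ) {s r : ℕ} (hs : 1 ≤ s) (hr1 : 1 ≤ r) (hrs : r ≤ s) :
    qpos φ s r = φ ^ (r - 1) / ∑ t ∈ range s, φ ^ t := by
  induction s, hs using Nat.le_induction generalizing r with
  | base => simp [qpos, show r = 1 by omega]
  | succ s hs ih =>
    have hZ : (∑ t ∈ range s, φ ^ t) ≠ 0 := (geom_sum_pos hφ (by omega)).ne'
    have hZ' : (∑ t ∈ range (s + 1), φ ^ t) ≠ 0 := (geom_sum_pos hφ (by omega)).ne'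
    -- At `r = s + 1` and at `r = 1` the corresponding term vanishes on both sides,
    -- through `qpos` and through an empty geometric sum respectively.
    have stay : qpos φ s r * ∑ l ∈ Icc (r + 1) (s + 1), insP φ (s + 1) l =
        φ ^ (r - 1) * (∑ t ∈ range (s + 1 - r), φ ^ t) /
          ((∑ t ∈ range s, φ ^ t) * ∑ t ∈ range (s + 1), φ ^ t) := by
      rw [sum_Icc_insP φ _ le_rfl, Nat.sub_self, pow_zero, one_mul,
        show s + 1 + 1 - (r + 1) = s + 1 - r by omega]
      rcases Nat.lt_or_ge s r with hsr | hrs'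
      · rw [qpos_eq_zero φ (Or.inr hsr), show s + 1 - r = 0 by omega]
        simp
      · rw [ih hr1 hrs']
        field_simp
    have shift : qpos φ s (r - 1) * ∑ l ∈ Icc 1 (r - 1), insP φ (s + 1) l =
        φ ^ s * (∑ t ∈ range (r - 1), φ ^ t) /
          ((∑ t ∈ range s, φ ^ t) * ∑ t ∈ range (s + 1), φ ^ t) := by
      rw [sum_Icc_insP φ _ (by omega), Nat.add_sub_cancel]
      rcases Nat.eq_or_lt_of_le hr1 with rfl | hr2
      · simp [qpos_eq_zero φ (Or.inl rfl)]
      · rw [ih (by omega) (by omega), div_mul_div_comm, ← mul_assoc, ← pow_add,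
          show r - 1 - 1 + (s + 1 - (r - 1)) = s by omega]
    rw [qpos_succ φ hs, stay, shift, ← add_div, show s + 1 - r = s - (r - 1) by omega,
      ← pow_mul_geom_sum_eq φ (show r - 1 ≤ s by omega)]
    field_simp

lemma probJBeforeOne_succ (φ : ℝ) (hφ : 0 ≤ φ) {s : ℕ} (hs : 1 ≤ s) :
    probJBeforeOne φ (s + 1) =
      φ ^ s / ((∑ t ∈ range s, φ ^ t) * ∑ t ∈ range (s + 1), φ ^ t) *
        ∑ r ∈ range (s + 1), ∑ t ∈ range r, φ ^ t := by
  have term : ∀ r ∈ Icc 1 s, qpos φ s r * ∑ l ∈ Icc 1 r, insP φ (s + 1) l =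
      φ ^ s / ((∑ t ∈ range s, φ ^ t) * ∑ t ∈ range (s + 1), φ ^ t) *
        ∑ t ∈ range r, φ ^ t := by
    intro r hr
    obtain ⟨hr1, hrs⟩ := mem_Icc.mp hr
    rw [qpos_eq φ hφ hs hr1 hrs, sum_Icc_insP φ _ (by omega), Nat.add_sub_cancel,
      div_mul_div_comm, ← mul_assoc, ← pow_add, show r - 1 + (s + 1 - r) = s by omega]
    ring
  rw [probJBeforeOne, Nat.add_sub_cancel, sum_congr rfl term, ← mul_sum]
  congr 1
  rw [sum_range_succ', ← Ico_add_one_right_eq_Icc, sum_Ico_eq_sum_range]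
  simp [add_comm]

/-- In the repeated insertion model with dispersion `0 ≤ φ < 1`, the
probability that item `j` is ranked before item 1 (for `j > 1`) equals
`φ^(j-1) (j-1 - jφ + φ^j)/((1-φ)² (1+⋯+φ^(j-2)) (1+⋯+φ^(j-1)))`. -/
theorem stmt2 (φ : ℝ) (hφ0 : 0 ≤ φ) (hφ1 : φ < 1) (j : ℕ) (hj : 2 ≤ j) :
    probJBeforeOne φ j =
      φ ^ (j-1) * (((j:ℝ) - 1) - (j:ℝ) * φ + φ ^ j) /
        ((1 - φ)^2 * (∑ t ∈ Finset.range (j-1), φ ^ t) * (∑ t ∈ Finset.range j, φ ^ t)) := by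
  obtain ⟨s, rfl⟩ : ∃ s, j = s + 1 := ⟨j - 1, by omega⟩
  have hZ : (∑ t ∈ range s, φ ^ t) ≠ 0 := (geom_sum_pos hφ0 (by omega)).ne'
  have hZ' : (∑ t ∈ range (s + 1), φ ^ t) ≠ 0 := (geom_sum_pos hφ0 (by omega)).ne'
  have h1φ : 1 - φ ≠ 0 := sub_ne_zero.mpr hφ1.ne'
  rw [probJBeforeOne_succ φ hφ0 (by omega), Nat.add_sub_cancel,
    ← sum_range_geom_sum_mul_one_sub_sq]
  field_simp
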